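/- arXiv:1405.2571 — 6 statements merged into one kernel-verified Lean document; each statement's English description precedes it below -/
import Mathlib

section
/- Let S be a maximal independent set of G_L and x ∈ S. Define ν(x) as the number of directions d ∈ {1,2,3} such that the grid line ℓ_{x,d} contains a node u ∈ V_L \ S with N(u) ∩ S = {x}. Then the maximum cardinality of a set I ⊆ V_L \ S such that (S \ {x}) ∪ I is an independent set of G_L equals ν(x). -/
/-- A PLS set: any two distinct triples have Hamming distance at least 2. -/
def IsPLS {n : ℕ} (T : Set (Fin 3 → Fin n)) : Prop :=
  ∀ v ∈ T, ∀ w ∈ T, v ≠ w → 2 ≤ hammingDist v w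

/-- The node set `V_L = [n]³ \ (L ∪ N*(L))`. -/
def VL {n : ℕ} (L : Set (Fin 3 → Fin n)) : Set (Fin 3 → Fin n) :=
  {v | v ∉ L ∧ ∀ w ∈ L, hammingDist v w ≠ 1}

/-- The graph `GraphL`: distinct nodes of `V_L` are adjacent iff their Hamming distance is 1. -/
def GraphL {n : ℕ} (L : Set (Fin 3 → Fin n)) : SimpleGraph (Fin 3 → Fin n) where
  Adj v w := v ∈ VL L ∧ w ∈ VL L ∧ hammingDist v w = 1
  symm := by
    constructor
    rintro v w ⟨hv, hw, h⟩
    exact ⟨hw, hv, by rwa [hammingDist_comm]⟩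
  loopless := by
    constructor
    rintro v ⟨_, _, h⟩
    simp [hammingDist_self] at h

/-- An independent set of a simple graph. -/
def IsIndep {V : Type*} (G : SimpleGraph V) (S : Set V) : Prop :=
  ∀ v ∈ S, ∀ w ∈ S, ¬ G.Adj v w

/-- The grid line `ℓ_{v,d}`: all triples agreeing with `v` in both coordinates other than `d`. -/
def gridLine {n : ℕ} (v : Fin 3 → Fin n) (d : Fin 3) : Set (Fin 3 → Fin n) :=
  {w | ∀ e, e ≠ d → w e = v e}

/-!
A node `u` that becomes insertable once `x` is removed has `x` as its only neighbour in `S`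
(a neighbour exists by maximality, and any other one would stay in the independent set), so `u`
lies on a grid line through `x`. Two distinct such nodes on the same line are adjacent, so an
insertable set meets each line through `x` at most once. Conversely, one witness for each counted
direction is insertable: witnesses on different lines through `x` differ from each other in two
coordinates.
-/

section GridLine

variable {n : ℕ} {x u v : Fin 3 → Fin n} {d e : Fin 3}

lemma exists_mem_gridLine_of_hammingDist_eq_one (h : hammingDist u x = 1) :
    ∃ d, u ∈ gridLine x d := by
  obtain ⟨d, hd⟩ := Finset.card_eq_one.mp h
  refine ⟨d, fun e he => ?_⟩
  by_contra hne
  have : e ∈ ({d} : Finset (Fin 3)) := hd ▸ Finset.mem_filter.2 ⟨Finset.mem_univ e, hne⟩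
  exact he (Finset.mem_singleton.1 this)

lemma hammingDist_le_one_of_mem_gridLine (hu : u ∈ gridLine x d) (hv : v ∈ gridLine x d) :
    hammingDist u v ≤ 1 := by
  have hdiff : ∀ c ∈ Finset.univ.filter fun i => u i ≠ v i, c = d := fun c hc => by
    by_contra hcd
    exact (Finset.mem_filter.1 hc).2 ((hu c hcd).trans (hv c hcd).symm)
  exact Finset.card_le_one.2 fun a ha b hb => (hdiff a ha).trans (hdiff b hb).symm

lemma apply_ne_of_mem_gridLine (hu : u ∈ gridLine x d) (hux : u ≠ x) : u d ≠ x d := by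
  refine fun h => hux (funext fun c => ?_)
  by_cases hcd : c = d
  · exact hcd ▸ h
  · exact hu c hcd

lemma two_le_hammingDist_of_mem_gridLine (hde : d ≠ e) (hu : u ∈ gridLine x d)
    (hv : v ∈ gridLine x e) (hux : u ≠ x) (hvx : v ≠ x) : 2 ≤ hammingDist u v := by
  refine Finset.one_lt_card.2 ⟨d, ?_, e, ?_, hde⟩
  · simpa [hv d hde] using apply_ne_of_mem_gridLine hu hux
  · simpa [hu e hde.symm] using (apply_ne_of_mem_gridLine hv hvx).symm

end GridLine

section IndependentSet

variable {V : Type*} {G : SimpleGraph V} {S I : Set V} {x u : V}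

lemma IsIndep.diff_singleton_union (hS : IsIndep G S) (hI : IsIndep G I)
    (hN : ∀ u ∈ I, G.neighborSet u ∩ S ⊆ {x}) : IsIndep G ((S \ {x}) ∪ I) := by
  rintro v (⟨hvS, hvx⟩ | hvI) w (⟨hwS, hwx⟩ | hwI) hvw
  · exact hS v hvS w hwS hvw
  · exact hvx (hN w hwI ⟨hvw.symm, hvS⟩)
  · exact hwx (hN v hvI ⟨hvw, hwS⟩)
  · exact hI v hvI w hwI hvw

lemma IsIndep.neighborSet_inter_eq_singleton (h : IsIndep G ((S \ {x}) ∪ I)) (hu : u ∈ I)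
    (hN : (G.neighborSet u ∩ S).Nonempty) : G.neighborSet u ∩ S = {x} :=
  hN.subset_singleton_iff.1 fun y ⟨hy, hyS⟩ => by
    by_contra hyx
    exact h u (Or.inr hu) y (Or.inl ⟨hyS, hyx⟩) hy

end IndependentSet

section OneSwap

variable {n : ℕ} {L S I : Set (Fin 3 → Fin n)} {x : Fin 3 → Fin n}

/-- `ν(x)` is the cardinality of this set. -/
def oneTightDirections (L S : Set (Fin 3 → Fin n)) (x : Fin 3 → Fin n) : Set (Fin 3) :=
  {d | ∃ u ∈ gridLine x d, u ∈ VL L \ S ∧ (GraphL L).neighborSet u ∩ S = {x}}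

lemma exists_insertion_ncard_eq_ncard_oneTightDirections (hind : IsIndep (GraphL L) S)
    (hx : x ∈ S) : ∃ I ⊆ VL L \ S, IsIndep (GraphL L) ((S \ {x}) ∪ I) ∧
      I.ncard = (oneTightDirections L S x).ncard := by
  set D := oneTightDirections L S x
  have : Nonempty (Fin 3 → Fin n) := ⟨x⟩
  choose! w hline hVS hN using fun d (hd : d ∈ D) => hd
  have hwx : ∀ d ∈ D, w d ≠ x := fun d hd h => (hVS d hd).2 (h ▸ hx)
  have hfar : ∀ d ∈ D, ∀ e ∈ D, d ≠ e → 2 ≤ hammingDist (w d) (w e) := fun d hd e he hde =>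
    two_le_hammingDist_of_mem_gridLine hde (hline d hd) (hline e he) (hwx d hd) (hwx e he)
  have hinj : Set.InjOn w D := fun d hd e he hwe => by
    by_contra hde
    have := hfar d hd e he hde
    rw [hwe, hammingDist_self] at this
    omega
  refine ⟨w '' D, ?_, hind.diff_singleton_union ?_ ?_, hinj.ncard_image⟩
  · rintro _ ⟨d, hd, rfl⟩
    exact hVS d hd
  · rintro _ ⟨d, hd, rfl⟩ _ ⟨e, he, rfl⟩ hadj
    obtain rfl | hde := eq_or_ne d e
    · exact hadj.ne rfl
    · have := hfar d hd e he hde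
      rw [hadj.2.2] at this
      omega
  · rintro _ ⟨d, hd, rfl⟩
    exact (hN d hd).le

lemma ncard_le_ncard_oneTightDirections
    (hmax : ∀ v ∈ VL L \ S, ((GraphL L).neighborSet v ∩ S).Nonempty)
    (hI : I ⊆ VL L \ S) (hind : IsIndep (GraphL L) ((S \ {x}) ∪ I)) :
    I.ncard ≤ (oneTightDirections L S x).ncard := by
  have hdir : ∀ u ∈ I, ∃ d, u ∈ gridLine x d ∧ d ∈ oneTightDirections L S x := by
    intro u hu
    have hN := hind.neighborSet_inter_eq_singleton hu (hmax u (hI hu))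
    have hux : x ∈ (GraphL L).neighborSet u ∩ S := hN ▸ rfl
    obtain ⟨d, hd⟩ := exists_mem_gridLine_of_hammingDist_eq_one hux.1.2.2
    exact ⟨d, hd, u, hd, hI hu, hN⟩
  choose! g hline hD using hdir
  refine Set.ncard_le_ncard_of_injOn g hD (fun u hu v hv huv => ?_) (Set.toFinite _)
  by_contra hne
  have hdist : hammingDist u v ≤ 1 :=
    hammingDist_le_one_of_mem_gridLine (hline u hu) (huv ▸ hline v hv)
  exact hind u (Or.inr hu) v (Or.inr hv)
    ⟨(hI hu).1, (hI hv).1, le_antisymm hdist (hammingDist_pos.2 hne)⟩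

end OneSwap

theorem one_swap_max_insertion_general (n : ℕ)
    (L : Set (Fin 3 → Fin n))
    (S : Set (Fin 3 → Fin n)) (hind : IsIndep (GraphL L) S)
    (hmax : ∀ v ∈ VL L \ S, ((GraphL L).neighborSet v ∩ S).Nonempty)
    (x : Fin 3 → Fin n) (hx : x ∈ S) :
    IsGreatest
      {k : ℕ | ∃ I ⊆ VL L \ S, IsIndep (GraphL L) ((S \ {x}) ∪ I) ∧ I.ncard = k}
      ({d : Fin 3 | ∃ u ∈ gridLine x d,
        u ∈ VL L \ S ∧ (GraphL L).neighborSet u ∩ S = {x}}.ncard) :=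
  ⟨exists_insertion_ncard_eq_ncard_oneTightDirections hind hx,
    fun _ ⟨_, hI, hindI, hk⟩ => hk ▸ ncard_le_ncard_oneTightDirections hmax hI hindI⟩

/-- for a maximal independent set `S` of `G_L` and `x ∈ S`, the maximum
cardinality of a set `I ⊆ V_L \ S` such that `(S \ {x}) ∪ I` is independent equals
`ν(x)`, the number of directions `d` whose grid line `ℓ_{x,d}` contains a node
`u ∈ V_L \ S` with `N(u) ∩ S = {x}`. -/
theorem one_swap_max_insertion (n : ℕ) (hn : 2 ≤ n)
    (L : Set (Fin 3 → Fin n)) (hL : IsPLS L)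
    (S : Set (Fin 3 → Fin n)) (hsub : S ⊆ VL L) (hind : IsIndep (GraphL L) S)
    (hmax : ∀ v ∈ VL L \ S, ((GraphL L).neighborSet v ∩ S).Nonempty)
    (x : Fin 3 → Fin n) (hx : x ∈ S) :
    IsGreatest
      {k : ℕ | ∃ I ⊆ VL L \ S, IsIndep (GraphL L) ((S \ {x}) ∪ I) ∧ I.ncard = k}
      ({d : Fin 3 | ∃ u ∈ gridLine x d,
        u ∈ VL L \ S ∧ (GraphL L).neighborSet u ∩ S = {x}}.ncard) :=
  one_swap_max_insertion_general n L S hind hmax x hx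
end

section
/- Let S be a maximal independent set of G_L. There exist x ∈ S and a set I ⊆ V_L \ S with |I| ≥ 2 such that (S \ {x}) ∪ I is independent (i.e., the (1,n²)-neighborhood of S contains an improved solution) if and only if there exist x ∈ S and two non-adjacent nodes u, v ∈ V_L \ S with N(u) ∩ S = N(v) ∩ S = {x}. -/
/-! The grid structure plays no role; this holds in any graph. Each node of a swap set `I` has, by
maximality, a neighbour in `S`, and independence of `(S \ {x}) ∪ I` forces that neighbour to be `x`.
Conversely, two non-adjacent nodes whose only neighbour in `S` is `x` can replace `x`. -/

namespace IsIndep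

variable {V : Type*} {G : SimpleGraph V} {S I : Set V} {x : V}

theorem pair {u v : V} (h : ¬G.Adj u v) : IsIndep G {u, v} := by
  rintro a (rfl | rfl) b (rfl | rfl)
  exacts [G.irrefl, h, fun h' => h h'.symm, G.irrefl]

theorem sdiff_singleton_union (hS : IsIndep G S) (hI : IsIndep G I)
    (hN : ∀ w ∈ I, G.neighborSet w ∩ S ⊆ {x}) : IsIndep G ((S \ {x}) ∪ I) := by
  have cross : ∀ s ∈ S \ {x}, ∀ w ∈ I, ¬G.Adj w s := fun s hs w hw hws =>
    hs.2 (hN w hw ⟨hws, hs.1⟩)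
  rintro a (ha | ha) b (hb | hb)
  exacts [hS a ha.1 b hb.1, fun hab => cross a ha b hb hab.symm, cross b hb a ha, hI a ha b hb]

theorem neighborSet_inter_eq_singleton_s10 (h : IsIndep G ((S \ {x}) ∪ I)) {w : V} (hw : w ∈ I)
    (hne : (G.neighborSet w ∩ S).Nonempty) : G.neighborSet w ∩ S = {x} := by
  refine Set.eq_singleton_iff_nonempty_unique_mem.mpr ⟨hne, fun y ⟨hwy, hy⟩ => ?_⟩
  by_contra hyx
  exact h w (Or.inr hw) y (Or.inl ⟨hy, hyx⟩) hwy

end IsIndep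

theorem one_swap_improvement_iff_general (n : ℕ)
    (L : Set (Fin 3 → Fin n))
    (S : Set (Fin 3 → Fin n)) (hind : IsIndep (GraphL L) S)
    (hmax : ∀ v ∈ VL L \ S, ((GraphL L).neighborSet v ∩ S).Nonempty) :
    (∃ x ∈ S, ∃ I ⊆ VL L \ S, 2 ≤ I.ncard ∧ IsIndep (GraphL L) ((S \ {x}) ∪ I)) ↔
    (∃ x ∈ S, ∃ u ∈ VL L \ S, ∃ v ∈ VL L \ S, u ≠ v ∧ ¬ (GraphL L).Adj u v ∧
      (GraphL L).neighborSet u ∩ S = {x} ∧ (GraphL L).neighborSet v ∩ S = {x}) := by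
  constructor
  · rintro ⟨x, hx, I, hIsub, hI2, hindI⟩
    obtain ⟨u, v, hu, hv, huv⟩ :=
      (Set.one_lt_ncard_iff (Set.finite_of_ncard_pos (by omega : 0 < I.ncard))).mp (by omega)
    have hN : ∀ w ∈ I, (GraphL L).neighborSet w ∩ S = {x} := fun w hw =>
      hindI.neighborSet_inter_eq_singleton_s10 hw (hmax w (hIsub hw))
    exact ⟨x, hx, u, hIsub hu, v, hIsub hv, huv, hindI u (Or.inr hu) v (Or.inr hv),
      hN u hu, hN v hv⟩
  · rintro ⟨x, hx, u, hu, v, hv, huv, hadj, hNu, hNv⟩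
    refine ⟨x, hx, {u, v}, Set.pair_subset hu hv, (Set.ncard_pair huv).ge, ?_⟩
    refine hind.sdiff_singleton_union (IsIndep.pair hadj) ?_
    rintro w (rfl | rfl)
    exacts [hNu.le, hNv.le]

/-- for a maximal independent set `S` of `G_L`, the `(1,n²)`-neighborhood
of `S` contains an improved solution iff there exist `x ∈ S` and two distinct
non-adjacent nodes `u, v ∈ V_L \ S` with `N(u) ∩ S = N(v) ∩ S = {x}`. -/
theorem one_swap_improvement_iff (n : ℕ) (hn : 2 ≤ n)
    (L : Set (Fin 3 → Fin n)) (hL : IsPLS L)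
    (S : Set (Fin 3 → Fin n)) (hsub : S ⊆ VL L) (hind : IsIndep (GraphL L) S)
    (hmax : ∀ v ∈ VL L \ S, ((GraphL L).neighborSet v ∩ S).Nonempty) :
    (∃ x ∈ S, ∃ I ⊆ VL L \ S, 2 ≤ I.ncard ∧ IsIndep (GraphL L) ((S \ {x}) ∪ I)) ↔
    (∃ x ∈ S, ∃ u ∈ VL L \ S, ∃ v ∈ VL L \ S, u ≠ v ∧ ¬ (GraphL L).Adj u v ∧
      (GraphL L).neighborSet u ∩ S = {x} ∧ (GraphL L).neighborSet v ∩ S = {x}) :=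
  one_swap_improvement_iff_general n L S hind hmax
end

section
/- Let S be an independent set of G_L and let u ∈ V_L \ S be a 2-tight node with N(u) ∩ S = {x, y}, x ≠ y, where x differs from u exactly in coordinate d_x and y differs from u exactly in coordinate d_y (necessarily d_x ≠ d_y). Then every node v ∈ V_L \ (S ∪ {u}) that has no neighbor in (S ∪ {u}) \ {x, y} satisfies N(v) ∩ S ⊆ {x, y}; moreover at most one such v satisfies |N(v) ∩ S| = 2, and if it exists it is the triple w determined by w_{d_x} = x_{d_x}, w_{d_y} = y_{d_y}, and w agreeing with u in the remaining coordinate. -/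
/-!
A triple `v` at Hamming distance 1 from both `x` and `y` cannot change a coordinate outside
`{dx, dy}`: it would then have to agree with `x` at `dy` and with `y` at `dy`, which differ. On
`{dx, dy}` it takes either the values of `u`, and then equals `u`, or those of `x` at `dx` and of
`y` at `dy`; every other combination again forces two different values at one coordinate.
-/

section Hamming

variable {ι : Type*} [Fintype ι] {β : ι → Type*} [∀ i, DecidableEq (β i)]

theorem apply_eq_of_hammingDist_eq_one {v w : ∀ i, β i} (h : hammingDist v w = 1) {i j : ι}
    (hij : i ≠ j) (hi : v i ≠ w i) : v j = w j := by
  by_contra hj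
  exact hij <| Finset.card_le_one.mp h.le i (by simpa using hi) j (by simpa using hj)

theorem eq_or_swap_of_hammingDist_eq_one {u x y v : ∀ i, β i} {a b : ι} (hab : a ≠ b)
    (hxa : x a ≠ u a) (hx : ∀ e, e ≠ a → x e = u e)
    (hyb : y b ≠ u b) (hy : ∀ e, e ≠ b → y e = u e)
    (hvx : hammingDist v x = 1) (hvy : hammingDist v y = 1) :
    v = u ∨ (v a = x a ∧ v b = y b ∧ ∀ e, e ≠ a → e ≠ b → v e = u e) := by
  have hxb : x b = u b := hx b hab.symm
  have hya : y a = u a := hy a hab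
  have hoff : ∀ e, e ≠ a → e ≠ b → v e = u e := by
    intro e hea heb
    by_contra hne
    have hvxb : v b = x b := apply_eq_of_hammingDist_eq_one hvx heb (by rwa [hx e hea])
    have hvyb : v b = y b := apply_eq_of_hammingDist_eq_one hvy heb (by rwa [hy e heb])
    exact hyb (hvyb.symm.trans (hvxb.trans hxb))
  by_cases hvxa : v a = x a
  · have hvyb : v b = y b := apply_eq_of_hammingDist_eq_one hvy hab (by rwa [hvxa, hya])
    exact Or.inr ⟨hvxa, hvyb, hoff⟩
  · have hvb : v b = u b := (apply_eq_of_hammingDist_eq_one hvx hab hvxa).trans hxb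
    by_cases hva : v a = u a
    · left
      funext e
      by_cases hea : e = a
      · exact hea ▸ hva
      by_cases heb : e = b
      · exact heb ▸ hvb
      exact hoff e hea heb
    · have hvyb : v b = y b := apply_eq_of_hammingDist_eq_one hvy hab (by rwa [hya])
      exact absurd (hvyb.symm.trans hvb) hyb

end Hamming

theorem two_swap_free_nodes_general (n : ℕ)
    (L : Set (Fin 3 → Fin n)) (S : Set (Fin 3 → Fin n)) (u : Fin 3 → Fin n)
    (x y : Fin 3 → Fin n) (hxy : x ≠ y)
    (dx dy : Fin 3) (hd : dx ≠ dy)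
    (hxd : x dx ≠ u dx) (hxe : ∀ e, e ≠ dx → x e = u e)
    (hyd : y dy ≠ u dy) (hye : ∀ e, e ≠ dy → y e = u e) :
    (∀ v, v ∈ VL L \ (S ∪ {u}) → (∀ z ∈ (S ∪ {u}) \ {x, y}, ¬ (GraphL L).Adj v z) →
      (GraphL L).neighborSet v ∩ S ⊆ {x, y}) ∧
    (∀ v, v ∈ VL L \ (S ∪ {u}) → (∀ z ∈ (S ∪ {u}) \ {x, y}, ¬ (GraphL L).Adj v z) →
      ((GraphL L).neighborSet v ∩ S).ncard = 2 →
      (v dx = x dx ∧ v dy = y dy ∧ ∀ e, e ≠ dx → e ≠ dy → v e = u e)) := by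
  have hfree : ∀ v, v ∈ VL L \ (S ∪ {u}) → (∀ z ∈ (S ∪ {u}) \ {x, y}, ¬ (GraphL L).Adj v z) →
      (GraphL L).neighborSet v ∩ S ⊆ {x, y} := by
    rintro v - hno z ⟨hadj, hzS⟩
    by_contra hz
    exact hno z ⟨Or.inl hzS, hz⟩ hadj
  refine ⟨hfree, fun v hv hno hcard => ?_⟩
  have hNv : (GraphL L).neighborSet v ∩ S = {x, y} :=
    Set.eq_of_subset_of_ncard_le (hfree v hv hno) (by rw [hcard, Set.ncard_pair hxy])
  have hvx : x ∈ (GraphL L).neighborSet v ∩ S := hNv ▸ Set.mem_insert x {y}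
  have hvy : y ∈ (GraphL L).neighborSet v ∩ S := hNv ▸ Set.mem_insert_of_mem x rfl
  refine (eq_or_swap_of_hammingDist_eq_one hd hxd hxe hyd hye hvx.1.2.2 hvy.1.2.2).resolve_left ?_
  rintro rfl
  exact hv.2 (Or.inr rfl)

/-- let `u` be a 2-tight node with `N(u) ∩ S = {x, y}`, where `x`
differs from `u` exactly in coordinate `dx` and `y` exactly in `dy ≠ dx`. Then every
node `v ∈ V_L \ (S ∪ {u})` with no neighbor in `(S ∪ {u}) \ {x, y}` satisfies
`N(v) ∩ S ⊆ {x, y}`; moreover any such `v` with `|N(v) ∩ S| = 2` is the uniquely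
determined triple with `v dx = x dx`, `v dy = y dy`, agreeing with `u` elsewhere. -/
theorem two_swap_free_nodes (n : ℕ) (hn : 2 ≤ n)
    (L : Set (Fin 3 → Fin n)) (hL : IsPLS L)
    (S : Set (Fin 3 → Fin n)) (hsub : S ⊆ VL L) (hind : IsIndep (GraphL L) S)
    (u : Fin 3 → Fin n) (hu : u ∈ VL L \ S)
    (x y : Fin 3 → Fin n) (hxy : x ≠ y)
    (hN : (GraphL L).neighborSet u ∩ S = {x, y})
    (dx dy : Fin 3) (hd : dx ≠ dy)
    (hxd : x dx ≠ u dx) (hxe : ∀ e, e ≠ dx → x e = u e)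
    (hyd : y dy ≠ u dy) (hye : ∀ e, e ≠ dy → y e = u e) :
    (∀ v, v ∈ VL L \ (S ∪ {u}) → (∀ z ∈ (S ∪ {u}) \ {x, y}, ¬ (GraphL L).Adj v z) →
      (GraphL L).neighborSet v ∩ S ⊆ {x, y}) ∧
    (∀ v, v ∈ VL L \ (S ∪ {u}) → (∀ z ∈ (S ∪ {u}) \ {x, y}, ¬ (GraphL L).Adj v z) →
      ((GraphL L).neighborSet v ∩ S).ncard = 2 →
      (v dx = x dx ∧ v dy = y dy ∧ ∀ e, e ≠ dx → e ≠ dy → v e = u e)) :=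
  two_swap_free_nodes_general n L S u x y hxy dx dy hd hxd hxe hyd hye
end

section
/- Let S be an independent set of G_L and let u ∈ V_L \ S be a 3-tight node with N(u) ∩ S = {x, y, z} (so x, y, z differ from u in three pairwise distinct coordinates). Then every node v ∈ V_L \ (S ∪ {u}) that has no neighbor in (S ∪ {u}) \ {x, y, z} satisfies N(v) ∩ S ⊆ {x, y, z} and |N(v) ∩ S| ≤ 2; moreover at most three such v satisfy |N(v) ∩ S| = 2, one candidate for each of the three pairs from {x, y, z}. -/
theorem Set.eq_of_encard_le_two {α : Type*} {s : Set α} {a b c : α} (hs : s.encard ≤ 2)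
    (ha : a ∈ s) (hb : b ∈ s) (hc : c ∈ s) (hba : b ≠ a) (hca : c ≠ a) : b = c := by
  by_contra hbc
  have h3 : ({a, b, c} : Set α).encard = 3 :=
    Set.encard_eq_three.2 ⟨a, b, c, hba.symm, hca.symm, hbc, rfl⟩
  have := h3 ▸ Set.encard_le_encard (Set.insert_subset ha (Set.insert_subset hb
    (Set.singleton_subset_iff.2 hc)))
  exact absurd (this.trans hs) (by norm_num)

section Hamming

variable {ι : Type*} [Fintype ι] {β : ι → Type*} [∀ i, DecidableEq (β i)]
  {u v w : ∀ i, β i}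

theorem hammingDist_eq_one_iff :
    hammingDist u v = 1 ↔ ∃ i, u i ≠ v i ∧ ∀ j ≠ i, u j = v j := by
  simp only [hammingDist, Finset.card_eq_one, Finset.eq_singleton_iff_unique_mem,
    Finset.mem_filter, Finset.mem_univ, true_and]
  exact exists_congr fun i => and_congr_right fun _ => forall_congr' fun j => not_imp_comm

theorem exists_eq_update_of_hammingDist_eq_one [DecidableEq ι] (huv : 2 ≤ hammingDist u v)
    (huw : hammingDist u w = 1) (hvw : hammingDist v w = 1) :
    ∃ i, u i ≠ v i ∧ w = Function.update u i (v i) := by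
  obtain ⟨i, hi, hwu⟩ := hammingDist_eq_one_iff.1 huw
  obtain ⟨j, -, hwv⟩ := hammingDist_eq_one_iff.1 hvw
  have hwi : w i = v i := by
    by_contra hne
    obtain rfl : i = j := by_contra fun hij => hne (hwv i hij).symm
    have : hammingDist u v ≤ 1 := Finset.card_le_one.2 fun a ha b hb => by
      have hab : ∀ k ∈ Finset.univ.filter (fun k => u k ≠ v k), k = i := fun k hk =>
        by_contra fun hki => (Finset.mem_filter.1 hk).2 ((hwu k hki).trans (hwv k hki).symm)
      rw [hab a ha, hab b hb]
    omega
  refine ⟨i, hwi ▸ hi, funext fun k => ?_⟩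
  rcases eq_or_ne k i with rfl | hki
  · simp [hwi]
  · simpa [hki] using (hwu k hki).symm

theorem encard_common_hammingNeighbors_le_two [DecidableEq ι] (huv : 2 ≤ hammingDist u v) :
    {w | hammingDist u w = 1 ∧ hammingDist v w = 1}.encard ≤ 2 := by
  rcases Set.eq_empty_or_nonempty {w | hammingDist u w = 1 ∧ hammingDist v w = 1} with
    hempty | ⟨w, huw, hvw⟩
  · simp [hempty]
  have hdist : hammingDist u v = 2 := le_antisymm (by
    calc hammingDist u v ≤ hammingDist u w + hammingDist w v := hammingDist_triangle u w v
      _ = 2 := by rw [hammingDist_comm w v, huw, hvw]) huv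
  calc {w | hammingDist u w = 1 ∧ hammingDist v w = 1}.encard
      ≤ ((fun i => Function.update u i (v i)) '' {i | u i ≠ v i}).encard :=
        Set.encard_le_encard fun w ⟨huw, hvw⟩ =>
          (exists_eq_update_of_hammingDist_eq_one huv huw hvw).imp fun _ h => ⟨h.1, h.2.symm⟩
    _ ≤ {i | u i ≠ v i}.encard := Set.encard_image_le _ _
    _ = hammingDist u v := by
      rw [hammingDist, ← Set.encard_coe_eq_coe_finsetCard, Finset.coe_filter]
      simp
    _ = 2 := by rw [hdist]; rfl

end Hamming

theorem GraphL.encard_commonNeighbors_le_two {n : ℕ} {L : Set (Fin 3 → Fin n)}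
    {v w : Fin 3 → Fin n} (hv : v ∈ VL L) (hw : w ∈ VL L) (hvw : v ≠ w)
    (hadj : ¬ (GraphL L).Adj v w) : ((GraphL L).commonNeighbors v w).encard ≤ 2 := by
  have hdist : 2 ≤ hammingDist v w := by
    have := hammingDist_pos.2 hvw
    have : hammingDist v w ≠ 1 := fun h => hadj ⟨hv, hw, h⟩
    omega
  refine le_trans (Set.encard_le_encard fun a ha => ?_)
    (encard_common_hammingNeighbors_le_two hdist)
  obtain ⟨hva, hwa⟩ := (GraphL L).mem_commonNeighbors.1 ha
  exact ⟨hva.2.2, hwa.2.2⟩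

theorem three_swap_free_nodes_general (n : ℕ)
    (L : Set (Fin 3 → Fin n))
    (S : Set (Fin 3 → Fin n)) (hind : IsIndep (GraphL L) S)
    (u : Fin 3 → Fin n) (hu : u ∈ VL L \ S)
    (x y z : Fin 3 → Fin n)
    (hN : (GraphL L).neighborSet u ∩ S = {x, y, z}) :
    (∀ v, v ∈ VL L \ (S ∪ {u}) → (∀ a ∈ (S ∪ {u}) \ {x, y, z}, ¬ (GraphL L).Adj v a) →
      (GraphL L).neighborSet v ∩ S ⊆ {x, y, z} ∧
      ((GraphL L).neighborSet v ∩ S).ncard ≤ 2) ∧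
    (∀ v v', v ∈ VL L \ (S ∪ {u}) → (∀ a ∈ (S ∪ {u}) \ {x, y, z}, ¬ (GraphL L).Adj v a) →
      v' ∈ VL L \ (S ∪ {u}) → (∀ a ∈ (S ∪ {u}) \ {x, y, z}, ¬ (GraphL L).Adj v' a) →
      ((GraphL L).neighborSet v ∩ S).ncard = 2 →
      (GraphL L).neighborSet v ∩ S = (GraphL L).neighborSet v' ∩ S → v = v') := by
  have hu_notMem : u ∉ ({x, y, z} : Set (Fin 3 → Fin n)) := fun h => hu.2 (hN ▸ h).2
  have key : ∀ v ∈ VL L \ (S ∪ {u}), (∀ a ∈ (S ∪ {u}) \ {x, y, z}, ¬ (GraphL L).Adj v a) →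
      v ≠ u ∧ ¬ (GraphL L).Adj v u ∧
        (GraphL L).neighborSet v ∩ S ⊆ (GraphL L).neighborSet u ∩ S := fun v hv hfree =>
    ⟨fun h => hv.2 (Or.inr h), hfree u ⟨Or.inr rfl, hu_notMem⟩,
      fun a ha => hN ▸ by_contra fun hnot => hfree a ⟨Or.inl ha.2, hnot⟩ ha.1⟩
  refine ⟨fun v hv hfree => ?_, fun v v' hv hfree hv' hfree' hcard heq => ?_⟩
  · obtain ⟨hvu, hnadj, hsub⟩ := key v hv hfree
    refine ⟨hN ▸ hsub, (Set.encard_le_coe_iff_finite_ncard_le.1 ?_).2⟩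
    exact (Set.encard_le_encard fun a ha =>
      (GraphL L).mem_commonNeighbors.2 ⟨ha.1, (hsub ha).1⟩).trans
      (GraphL.encard_commonNeighbors_le_two hv.1 hu.1 hvu hnadj)
  · obtain ⟨hvu, -, hsub⟩ := key v hv hfree
    obtain ⟨hv'u, -, -⟩ := key v' hv' hfree'
    obtain ⟨a, b, hab, hvab⟩ := Set.ncard_eq_two.1 hcard
    have ha : a ∈ (GraphL L).neighborSet v ∩ S := hvab ▸ Or.inl rfl
    have hb : b ∈ (GraphL L).neighborSet v ∩ S := hvab ▸ Or.inr rfl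
    have ha' : a ∈ (GraphL L).neighborSet v' ∩ S := heq ▸ ha
    have hb' : b ∈ (GraphL L).neighborSet v' ∩ S := heq ▸ hb
    have hua : (GraphL L).Adj u a := (hsub ha).1
    have hub : (GraphL L).Adj u b := (hsub hb).1
    have hcommon (w : Fin 3 → Fin n) (hwa : (GraphL L).Adj w a) (hwb : (GraphL L).Adj w b) :
        w ∈ (GraphL L).commonNeighbors a b :=
      (GraphL L).mem_commonNeighbors.2 ⟨hwa.symm, hwb.symm⟩
    exact Set.eq_of_encard_le_two
      (GraphL.encard_commonNeighbors_le_two hua.2.1 hub.2.1 hab (hind a ha.2 b hb.2))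
      (hcommon u hua hub) (hcommon v ha.1 hb.1) (hcommon v' ha'.1 hb'.1) hvu hv'u

/-- let `u` be a 3-tight node with `N(u) ∩ S = {x, y, z}`. Then every
node `v ∈ V_L \ (S ∪ {u})` with no neighbor in `(S ∪ {u}) \ {x, y, z}` satisfies
`N(v) ∩ S ⊆ {x, y, z}` and `|N(v) ∩ S| ≤ 2`; moreover at most three such nodes have
`|N(v) ∩ S| = 2`: at most one candidate for each of the three pairs from `{x,y,z}`. -/
theorem three_swap_free_nodes (n : ℕ) (hn : 2 ≤ n)
    (L : Set (Fin 3 → Fin n)) (hL : IsPLS L)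
    (S : Set (Fin 3 → Fin n)) (hsub : S ⊆ VL L) (hind : IsIndep (GraphL L) S)
    (u : Fin 3 → Fin n) (hu : u ∈ VL L \ S)
    (x y z : Fin 3 → Fin n) (hxy : x ≠ y) (hyz : y ≠ z) (hxz : x ≠ z)
    (hN : (GraphL L).neighborSet u ∩ S = {x, y, z}) :
    (∀ v, v ∈ VL L \ (S ∪ {u}) → (∀ a ∈ (S ∪ {u}) \ {x, y, z}, ¬ (GraphL L).Adj v a) →
      (GraphL L).neighborSet v ∩ S ⊆ {x, y, z} ∧
      ((GraphL L).neighborSet v ∩ S).ncard ≤ 2) ∧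
    (∀ v v', v ∈ VL L \ (S ∪ {u}) → (∀ a ∈ (S ∪ {u}) \ {x, y, z}, ¬ (GraphL L).Adj v a) →
      v' ∈ VL L \ (S ∪ {u}) → (∀ a ∈ (S ∪ {u}) \ {x, y, z}, ¬ (GraphL L).Adj v' a) →
      ((GraphL L).neighborSet v ∩ S).ncard = 2 →
      (GraphL L).neighborSet v ∩ S = (GraphL L).neighborSet v' ∩ S → v = v') :=
  three_swap_free_nodes_general n L S hind u hu x y z hN
end

section
/- (Theorem 5, part 3) Let L ⊆ [n]³ be a PLS set and let S be an independent set of G_L that is (p,n²)-maximal for every p ∈ {0, 1, 2, 3}. Then S is a 3/5-approximate solution of the PLSE instance L: for every independent set S* of G_L, 5·|S| ≥ 3·|S*|. -/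
/-!
Put `A = S* \ S` and `B = S \ S*`; every neighbour in `S` of a vertex of `A` lies in `B`. Trading
at most three vertices `R ⊆ B` for all vertices of `A` whose neighbourhood lies in `R` keeps `S`
independent, so maximality gives Hall's condition in the bipartite graph between `A` and `B` for
neighbourhoods of at most three vertices. A vertex of `B` has at most three neighbours in `A`, one
per coordinate direction.

Let `A₁`, `A₂` be the vertices of `A` of degree one and two, and `B₁` the neighbours of `A₁`. Hall's
condition gives `|A₁| ≤ |B₁|`, and `|A₂| ≤ 2 |B \ B₁|`: a vertex of `A₂` has at most one neighbour
in `B₁`, and a vertex `c ∈ B \ B₁` is the only neighbour outside `B₁` of at most one vertex of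
`A₂`. As every vertex of `A` has a neighbour,
`3 |A| ≤ e(A, B) + 2 |A₁| + |A₂| ≤ 3 |B| + 2 |B₁| + 2 |B \ B₁| = 5 |B|`.
-/

open Finset

theorem card_le_of_hammingDist_eq_one {ι : Type*} [Fintype ι] {β : ι → Type*}
    [∀ i, DecidableEq (β i)] {P : Finset (∀ i, β i)} {z : ∀ i, β i}
    (hP : ∀ x ∈ P, ∀ y ∈ P, hammingDist x y ≠ 1) (hz : ∀ x ∈ P, hammingDist x z = 1) :
    #P ≤ Fintype.card ι := by
  have hinj : Set.InjOn (fun x : ∀ i, β i ↦ ({i | x i ≠ z i} : Finset ι)) P := by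
    intro x hx y hy hxy
    have hle : hammingDist x y ≤ hammingDist x z := by
      refine card_le_card fun i hi ↦ ?_
      have hi' := congrArg (i ∈ ·) hxy
      simp only [mem_filter, mem_univ, true_and, eq_iff_iff] at hi hi' ⊢
      grind
    have := hP x hx y hy
    have := hz x hx
    exact hammingDist_eq_zero.1 (by omega)
  calc #P ≤ #(powersetCard 1 (univ : Finset ι)) :=
        card_le_card_of_injOn _ (fun x hx ↦ mem_powersetCard.2 ⟨subset_univ _, hz x hx⟩) hinj
    _ = Fintype.card ι := by simp

section Bipartite

variable {α β : Type*} (r : α → β → Prop) [∀ a b, Decidable (r a b)] (A : Finset α) (B : Finset β)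

/-- Hall's condition `#T ≤ #N(T)`, required only of the sets `T ⊆ A` with `#N(T) ≤ k`. -/
def LocalHall (k : ℕ) : Prop :=
  ∀ R ⊆ B, #R ≤ k → ∀ T ⊆ A, (∀ a ∈ T, B.bipartiteAbove r a ⊆ R) → #T ≤ #R

def pendants : Finset α := {a ∈ A | #(B.bipartiteAbove r a) = 1}

def pendantNbrs [DecidableEq β] : Finset β := (pendants r A B).biUnion (B.bipartiteAbove r ·)

variable {r A B} {k : ℕ} {a : α} {b : β}

theorem bipartiteAbove_eq_singleton_of_mem_pendants (ha : a ∈ pendants r A B)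
    (hb : b ∈ B.bipartiteAbove r a) : B.bipartiteAbove r a = {b} := by
  obtain ⟨b', hb'⟩ := card_eq_one.1 (mem_filter.1 ha).2
  rw [hb'] at hb ⊢
  rw [mem_singleton.1 hb]

theorem bipartiteAbove_sdiff [DecidableEq β] (P : Finset β) :
    (B \ P).bipartiteAbove r a = B.bipartiteAbove r a \ P := by
  ext b
  simp only [mem_bipartiteAbove, mem_sdiff]
  tauto

namespace LocalHall

theorem bipartiteAbove_nonempty (h : LocalHall r A B k) (ha : a ∈ A) :
    (B.bipartiteAbove r a).Nonempty := by
  by_contra hempty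
  have := h ∅ (empty_subset _) (Nat.zero_le _) {a} (singleton_subset_iff.2 ha)
    (by simpa [not_nonempty_iff_eq_empty] using hempty)
  simp at this

theorem card_pendants_le [DecidableEq α] [DecidableEq β] (h : LocalHall r A B k) (hk : 1 ≤ k) :
    #(pendants r A B) ≤ #(pendantNbrs r A B) := by
  refine card_le_card_of_forall_subsingleton r (fun a ha ↦ ?_) (fun b hb a ha a' ha' ↦ ?_)
  · obtain ⟨b, hb⟩ := (h.bipartiteAbove_nonempty (mem_filter.1 ha).1).exists_mem
    exact ⟨b, mem_biUnion.2 ⟨a, ha, hb⟩, (mem_bipartiteAbove r).1 hb |>.2⟩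
  · have hbB : b ∈ B := by
      obtain ⟨_, _, hb⟩ := mem_biUnion.1 hb
      exact (mem_filter.1 hb).1
    have hpair := h {b} (singleton_subset_iff.2 hbB) (by simpa using hk) {a, a'}
      (by simp [insert_subset_iff, (mem_filter.1 ha.1).1, (mem_filter.1 ha'.1).1])
      (by
        simp only [mem_insert, mem_singleton, forall_eq_or_imp, forall_eq]
        exact ⟨(bipartiteAbove_eq_singleton_of_mem_pendants ha.1
            ((mem_bipartiteAbove r).2 ⟨hbB, ha.2⟩)).le,
          (bipartiteAbove_eq_singleton_of_mem_pendants ha'.1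
            ((mem_bipartiteAbove r).2 ⟨hbB, ha'.2⟩)).le⟩)
    exact card_le_one.1 (by simpa using hpair) a (by simp) a' (by simp)

theorem card_add_card_inter_pendantNbrs_le [DecidableEq α] [DecidableEq β]
    (h : LocalHall r A B k) {R : Finset β} {T : Finset α} (hRB : R ⊆ B) (hRk : #R ≤ k)
    (hTA : T ⊆ A) (hT : ∀ a ∈ T, #(B.bipartiteAbove r a) ≠ 1)
    (hTR : ∀ a ∈ T, B.bipartiteAbove r a ⊆ R) :
    #T + #(R ∩ pendantNbrs r A B) ≤ #R := by
  set P := {a ∈ pendants r A B | B.bipartiteAbove r a ⊆ R}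
  have hP : #(R ∩ pendantNbrs r A B) ≤ #P := by
    calc #(R ∩ pendantNbrs r A B) ≤ #(P.biUnion (B.bipartiteAbove r ·)) := by
          refine card_le_card fun b hb ↦ ?_
          obtain ⟨hbR, hb⟩ := mem_inter.1 hb
          obtain ⟨a, ha, hab⟩ := mem_biUnion.1 hb
          have hsingle := bipartiteAbove_eq_singleton_of_mem_pendants ha hab
          exact mem_biUnion.2 ⟨a, mem_filter.2 ⟨ha, by simpa [hsingle] using hbR⟩, hab⟩
      _ ≤ ∑ a ∈ P, #(B.bipartiteAbove r a) := card_biUnion_le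
      _ = #P := by
          rw [card_eq_sum_ones]
          exact sum_congr rfl fun a ha ↦ (mem_filter.1 (mem_filter.1 ha).1).2
  have hdisj : Disjoint T P := disjoint_left.2 fun a haT haP ↦
    hT a haT (mem_filter.1 (mem_filter.1 haP).1).2
  have hunion := h R hRB hRk (T ∪ P)
    (union_subset hTA fun a ha ↦ (mem_filter.1 (mem_filter.1 ha).1).1)
    (fun a ha ↦ (mem_union.1 ha).elim (hTR a) fun ha ↦ (mem_filter.1 ha).2)
  rw [card_union_of_disjoint hdisj] at hunion
  omega

theorem card_bipartiteAbove_sdiff_pendantNbrs_pos [DecidableEq α] [DecidableEq β]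
    (h : LocalHall r A B k) (hk : 2 ≤ k) (ha : a ∈ A) (ha2 : #(B.bipartiteAbove r a) = 2) :
    0 < #((B \ pendantNbrs r A B).bipartiteAbove r a) := by
  have := h.card_add_card_inter_pendantNbrs_le (R := B.bipartiteAbove r a) (filter_subset _ _)
    (by omega) (singleton_subset_iff.2 ha) (by simp [ha2]) (by simp)
  have hsplit := card_sdiff_add_card_inter (B.bipartiteAbove r a) (pendantNbrs r A B)
  rw [card_singleton, ha2] at this
  rw [bipartiteAbove_sdiff]
  omega

/-- Otherwise `a`, `a'` and the pendant vertices attached to `R = N a ∪ N a'` would be `#R + 1`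
vertices with neighbourhoods in `R`, and `#R ≤ 3`. -/
theorem eq_of_bipartiteAbove_sdiff_pendantNbrs_eq [DecidableEq α] [DecidableEq β]
    (h : LocalHall r A B k) (hk : 3 ≤ k) {c : β} {a a' : α} (ha : a ∈ A) (ha' : a' ∈ A)
    (ha2 : #(B.bipartiteAbove r a) = 2) (ha'2 : #(B.bipartiteAbove r a') = 2)
    (hac : (B \ pendantNbrs r A B).bipartiteAbove r a = {c})
    (ha'c : (B \ pendantNbrs r A B).bipartiteAbove r a' = {c}) : a = a' := by
  by_contra hne
  rw [bipartiteAbove_sdiff] at hac ha'c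
  set R := B.bipartiteAbove r a ∪ B.bipartiteAbove r a'
  have hR3 : #R ≤ 3 := by
    have hinter : #R + #(B.bipartiteAbove r a ∩ B.bipartiteAbove r a') = 2 + 2 :=
      (card_union_add_card_inter _ _).trans (by rw [ha2, ha'2])
    have hc : c ∈ B.bipartiteAbove r a ∩ B.bipartiteAbove r a' :=
      mem_inter.2 ⟨(mem_sdiff.1 (hac ▸ mem_singleton_self c)).1,
        (mem_sdiff.1 (ha'c ▸ mem_singleton_self c)).1⟩
    have := card_pos.2 ⟨c, hc⟩
    omega
  have hRP : #R = #(R ∩ pendantNbrs r A B) + 1 := by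
    have hRc : R \ pendantNbrs r A B = {c} := by rw [union_sdiff_distrib, hac, ha'c, union_self]
    rw [← card_sdiff_add_card_inter R (pendantNbrs r A B), hRc, card_singleton, add_comm]
  have := h.card_add_card_inter_pendantNbrs_le (R := R) (T := {a, a'})
    (union_subset (filter_subset _ _) (filter_subset _ _)) (hR3.trans hk)
    (insert_subset ha (singleton_subset_iff.2 ha')) (by simp [ha2, ha'2])
    (by
      simp only [mem_insert, mem_singleton, forall_eq_or_imp, forall_eq]
      exact ⟨subset_union_left, subset_union_right⟩)
  rw [card_pair hne] at this
  omega

theorem card_le_card_sdiff_pendantNbrs [DecidableEq α] [DecidableEq β]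
    (h : LocalHall r A B k) (hk : 3 ≤ k) {T : Finset α}
    (hT : ∀ a ∈ T, a ∈ A ∧ #(B.bipartiteAbove r a) = 2 ∧
      #((B \ pendantNbrs r A B).bipartiteAbove r a) = 1) :
    #T ≤ #(B \ pendantNbrs r A B) := by
  refine card_le_card_of_forall_subsingleton r (fun a ha ↦ ?_) (fun c hc a ha a' ha' ↦ ?_)
  · obtain ⟨c, hc⟩ := card_eq_one.1 (hT a ha).2.2
    exact ⟨c, (mem_bipartiteAbove r).1 (hc ▸ mem_singleton_self c)⟩
  · have hsingle : ∀ a ∈ T, r a c → (B \ pendantNbrs r A B).bipartiteAbove r a = {c} :=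
      fun a ha hac ↦ eq_singleton_iff_unique_mem.2 ⟨(mem_bipartiteAbove r).2 ⟨hc, hac⟩,
        fun x hx ↦ card_le_one.1 (hT a ha).2.2.le x hx c ((mem_bipartiteAbove r).2 ⟨hc, hac⟩)⟩
    exact h.eq_of_bipartiteAbove_sdiff_pendantNbrs_eq hk (hT a ha.1).1 (hT a' ha'.1).1
      (hT a ha.1).2.1 (hT a' ha'.1).2.1 (hsingle a ha.1 ha.2) (hsingle a' ha'.1 ha'.2)

theorem three_mul_card_le [DecidableEq α] [DecidableEq β] (h : LocalHall r A B 3)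
    (hB : ∀ b ∈ B, #(A.bipartiteBelow r b) ≤ 3) : 3 * #A ≤ 5 * #B := by
  set C := B \ pendantNbrs r A B
  set A2 := {a ∈ A | #(B.bipartiteAbove r a) = 2}
  set A2' := {a ∈ A2 | #(C.bipartiteAbove r a) = 1}
  have hsplit : #(pendantNbrs r A B) + #C = #B := by
    rw [add_comm, card_sdiff_add_card_eq_card]
    exact biUnion_subset.2 fun _ _ ↦ filter_subset _ _
  have hedges : ∑ a ∈ A, #(B.bipartiteAbove r a) ≤ #B * 3 := by
    rw [sum_card_bipartiteAbove_eq_sum_card_bipartiteBelow]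
    exact sum_le_card_nsmul _ _ _ hB
  have hedgesC : ∑ a ∈ A2, #(C.bipartiteAbove r a) ≤ #C * 3 := by
    rw [sum_card_bipartiteAbove_eq_sum_card_bipartiteBelow]
    exact sum_le_card_nsmul _ _ _ fun c hc ↦
      (card_le_card (filter_subset_filter _ (filter_subset _ _))).trans (hB c (sdiff_subset hc))
  have hA2' : #A2' ≤ #C := h.card_le_card_sdiff_pendantNbrs le_rfl fun a ha ↦
    ⟨(mem_filter.1 (mem_filter.1 ha).1).1, (mem_filter.1 (mem_filter.1 ha).1).2,
      (mem_filter.1 ha).2⟩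
  have hcount : 3 * #A ≤ ∑ a ∈ A, #(B.bipartiteAbove r a) + 2 * #(pendants r A B) + #A2 := by
    calc 3 * #A = ∑ a ∈ A, 3 := by rw [sum_const, smul_eq_mul, mul_comm]
      _ ≤ ∑ a ∈ A, (#(B.bipartiteAbove r a) + 2 * (if #(B.bipartiteAbove r a) = 1 then 1 else 0)
            + if #(B.bipartiteAbove r a) = 2 then 1 else 0) :=
          sum_le_sum fun a ha ↦ by
            have := (h.bipartiteAbove_nonempty ha).card_pos
            split_ifs <;> omega
      _ = _ := by
          rw [sum_add_distrib, sum_add_distrib, ← mul_sum, pendants, card_filter, card_filter]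
  have hcountC : 2 * #A2 ≤ ∑ a ∈ A2, #(C.bipartiteAbove r a) + #A2' := by
    calc 2 * #A2 = ∑ a ∈ A2, 2 := by rw [sum_const, smul_eq_mul, mul_comm]
      _ ≤ ∑ a ∈ A2, (#(C.bipartiteAbove r a) + if #(C.bipartiteAbove r a) = 1 then 1 else 0) :=
          sum_le_sum fun a ha ↦ by
            have : 0 < #(C.bipartiteAbove r a) :=
              h.card_bipartiteAbove_sdiff_pendantNbrs_pos (by norm_num) (mem_filter.1 ha).1
                (mem_filter.1 ha).2
            split_ifs <;> omega
      _ = _ := by rw [sum_add_distrib, card_filter]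
  have := h.card_pendants_le (by norm_num)
  omega

end LocalHall

end Bipartite

/-- `S` is `(p, n²)`-maximal for every `p ≤ k`, with `U` the vertices available for insertion. -/
def IsSwapMaximal {V : Type*} (G : SimpleGraph V) (U S : Set V) (k : ℕ) : Prop :=
  ∀ p : ℕ, p ≤ k → ∀ R ⊆ S, R.ncard = p → ∀ I ⊆ U \ S,
    IsIndep G ((S \ R) ∪ I) → ((S \ R) ∪ I).ncard ≤ S.ncard

theorem IsSwapMaximal.localHall {V : Type*} [DecidableEq V] {G : SimpleGraph V}
    [DecidableRel G.Adj] {U : Set V} {S S' : Finset V} {k : ℕ}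
    (hmax : IsSwapMaximal G U S k) (hS : IsIndep G S) (hS' : IsIndep G S') (hS'U : ↑S' ⊆ U) :
    LocalHall G.Adj (S' \ S) (S \ S') k := by
  intro R hRB hRk T hTA hTR
  have hT : ∀ w ∈ T, w ∈ S' ∧ w ∉ S := fun w hw ↦ mem_sdiff.1 (hTA hw)
  have hRS : R ⊆ S := hRB.trans sdiff_subset
  have hcross : ∀ v ∈ S \ R, ∀ w ∈ T, ¬ G.Adj w v := by
    intro v hv w hw hwv
    obtain ⟨hvS, hvR⟩ := mem_sdiff.1 hv
    have hvS' : v ∉ S' := fun hvS' ↦ hS' w (mem_coe.2 (hT w hw).1) v hvS' hwv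
    exact hvR (hTR w hw ((mem_bipartiteAbove _).2 ⟨mem_sdiff.2 ⟨hvS, hvS'⟩, hwv⟩))
  have hindep : IsIndep G (↑(S \ R ∪ T)) := by
    intro v hv w hw hvw
    rcases mem_union.1 hv with hv | hv <;> rcases mem_union.1 hw with hw | hw
    · exact hS v (mem_coe.2 (mem_sdiff.1 hv).1) w
        (mem_coe.2 (mem_sdiff.1 hw).1) hvw
    · exact hcross v hv w hw hvw.symm
    · exact hcross w hw v hv hvw
    · exact hS' v (mem_coe.2 (hT v hv).1) w (mem_coe.2 (hT w hw).1) hvw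
  have hI : (↑T : Set V) ⊆ U \ ↑S := fun w hw ↦
    ⟨hS'U (mem_coe.2 (hT w hw).1), mt mem_coe.1 (hT w hw).2⟩
  have hdisj : Disjoint (S \ R) T :=
    disjoint_left.2 fun v hv hvT ↦ (hT v hvT).2 (mem_sdiff.1 hv).1
  have := hmax #R hRk R (coe_subset.2 hRS) (Set.ncard_coe_finset R) T hI
    (by rwa [← coe_sdiff, ← coe_union])
  rw [← coe_sdiff, ← coe_union, Set.ncard_coe_finset, Set.ncard_coe_finset,
    card_union_of_disjoint hdisj, card_sdiff_of_subset hRS] at this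
  have := card_le_card hRS
  omega

theorem three_maximal_three_fifth_approx_general (n : ℕ)
    (L : Set (Fin 3 → Fin n))
    (S : Set (Fin 3 → Fin n)) (hind : IsIndep (GraphL L) S)
    (hmax : ∀ p : ℕ, p ≤ 3 → ∀ R ⊆ S, R.ncard = p → ∀ I ⊆ VL L \ S,
      IsIndep (GraphL L) ((S \ R) ∪ I) → ((S \ R) ∪ I).ncard ≤ S.ncard)
    (Sstar : Set (Fin 3 → Fin n)) (hstar : Sstar ⊆ VL L)
    (hindstar : IsIndep (GraphL L) Sstar) :
    3 * Sstar.ncard ≤ 5 * S.ncard := by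
  classical
  lift S to Finset (Fin 3 → Fin n) using S.toFinite
  lift Sstar to Finset (Fin 3 → Fin n) using Sstar.toFinite
  have hHall : LocalHall (GraphL L).Adj (Sstar \ S) (S \ Sstar) 3 :=
    IsSwapMaximal.localHall hmax hind hindstar hstar
  have hdeg : ∀ b ∈ S \ Sstar, #((Sstar \ S).bipartiteBelow (GraphL L).Adj b) ≤ 3 := by
    intro b _
    have hmem : ∀ x ∈ (Sstar \ S).bipartiteBelow (GraphL L).Adj b, x ∈ Sstar :=
      fun x hx ↦ (mem_sdiff.1 (mem_filter.1 hx).1).1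
    refine (card_le_of_hammingDist_eq_one (fun x hx y hy hxy ↦ ?_)
      (fun x hx ↦ (mem_filter.1 hx).2.2.2)).trans_eq (Fintype.card_fin 3)
    exact hindstar x (hmem x hx) y (hmem y hy) ⟨hstar (hmem x hx), hstar (hmem y hy), hxy⟩
  have := hHall.three_mul_card_le hdeg
  have := card_sdiff_add_card_inter Sstar S
  have := inter_comm S Sstar ▸ card_sdiff_add_card_inter S Sstar
  rw [Set.ncard_coe_finset, Set.ncard_coe_finset]
  omega

/-- Theorem 5, part 3: a 3-maximal solution (i.e. `(p,n²)`-maximal for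
every `p ∈ {0,1,2,3}`) is a 3/5-approximate solution of the PLSE instance `L`. -/
theorem three_maximal_three_fifth_approx (n : ℕ) (hn : 2 ≤ n)
    (L : Set (Fin 3 → Fin n)) (hL : IsPLS L)
    (S : Set (Fin 3 → Fin n)) (hsub : S ⊆ VL L) (hind : IsIndep (GraphL L) S)
    (hmax : ∀ p : ℕ, p ≤ 3 → ∀ R ⊆ S, R.ncard = p → ∀ I ⊆ VL L \ S,
      IsIndep (GraphL L) ((S \ R) ∪ I) → ((S \ R) ∪ I).ncard ≤ S.ncard)
    (Sstar : Set (Fin 3 → Fin n)) (hstar : Sstar ⊆ VL L)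
    (hindstar : IsIndep (GraphL L) Sstar) :
    3 * Sstar.ncard ≤ 5 * S.ncard :=
  three_maximal_three_fifth_approx_general n L S hind hmax Sstar hstar hindstar
end

section
/- Trellis-swap generalizes (1,n²)-swap and (2,n²)-swap: let S be an independent set of G_L that is maximal and (1,n²)-maximal, and suppose S is Trellis-maximal, i.e., for every d ∈ {1,2,3} and k ∈ [n], with R = S ∩ Φ_{d,k}, F₁ = {v ∈ V_L \ S : |N(v) ∩ S| = 1 and N(v) ∩ S ⊆ R}, and F₂ = {v ∈ V_L \ S : |N(v) ∩ S| = 2 and N(v) ∩ S ⊆ R}, there is no independent set I ⊆ R ∪ F₁ ∪ F₂ of G_L with |S \ R| + |I| > |S|. Then S is (2,n²)-maximal: there is no R' ⊆ S with |R'| = 2 and I' ⊆ V_L \ S such that (S \ R') ∪ I' is independent and |(S \ R') ∪ I'| > |S|. -/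
/-!
Let `R' = {r₁, r₂} ⊆ S` be removed and `I'` swapped in. By independence every `v ∈ I'` has all
its `S`-neighbours in `R'`, and by maximality at least one, so it suffices to see `|I'| ≤ 2`.
If `r₁` and `r₂` agree in a coordinate `d`, they lie in a common facet `Φ_{d,k}` with
`R = S ∩ Φ_{d,k}`, and `I' ∪ (R \ R')` is an independent subset of `R ∪ F₁ ∪ F₂`: the
`(2,n²)`-swap is itself a Trellis swap on that facet, so it cannot gain. Otherwise `r₁` and
`r₂` are at Hamming distance 3 and no node is adjacent to both, so `I'` splits into the nodes
whose only `S`-neighbour is `r₁` and those whose only `S`-neighbour is `r₂`; each part is a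
`(1,n²)`-swap for its `rᵢ` and has at most one element.
-/

namespace IsIndep

variable {α : Type*} {G : SimpleGraph α} {S I R : Set α}

theorem mono {T : Set α} (hS : IsIndep G S) (hTS : T ⊆ S) : IsIndep G T :=
  fun v hv w hw => hS v (hTS hv) w (hTS hw)

theorem neighborSet_inter_subset_of_diff_union (h : IsIndep G ((S \ R) ∪ I)) {v : α}
    (hv : v ∈ I) : G.neighborSet v ∩ S ⊆ R := fun w ⟨hadj, hwS⟩ => by
  by_contra hwR
  exact h v (Or.inr hv) w (Or.inl ⟨hwS, hwR⟩) hadj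

theorem diff_union (hS : IsIndep G S) (hI : IsIndep G I)
    (hN : ∀ v ∈ I, G.neighborSet v ∩ S ⊆ R) : IsIndep G ((S \ R) ∪ I) := by
  rintro v (hv | hv) w (hw | hw) hadj
  · exact hS v hv.1 w hw.1 hadj
  · exact hv.2 <| hN w hw ⟨G.adj_symm hadj, hv.1⟩
  · exact hw.2 <| hN v hv ⟨hadj, hw.1⟩
  · exact hI v hv w hw hadj

end IsIndep

section Swap

variable {α : Type*} [Finite α]

theorem Set.ncard_diff_union_add_ncard {S R I : Set α} (hRS : R ⊆ S) (hIS : Disjoint S I) :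
    ((S \ R) ∪ I).ncard + R.ncard = S.ncard + I.ncard := by
  rw [Set.ncard_union_eq (hIS.mono_left Set.sdiff_subset), add_right_comm,
    Set.ncard_sdiff_add_ncard_of_subset hRS]

variable (G : SimpleGraph α) (U S : Set α)

/-- The set `R ∪ F₁ ∪ F₂` of the Trellis swap that removes `R ⊆ S`. -/
def trellisCandidates (R : Set α) : Set α :=
  R ∪ {w | w ∈ U \ S ∧ (G.neighborSet w ∩ S).ncard = 1 ∧ G.neighborSet w ∩ S ⊆ R} ∪
    {w | w ∈ U \ S ∧ (G.neighborSet w ∩ S).ncard = 2 ∧ G.neighborSet w ∩ S ⊆ R}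

variable {G U S}

theorem mem_trellisCandidates {R : Set α} {v : α} (hv : v ∈ U \ S)
    (hne : (G.neighborSet v ∩ S).Nonempty) (hle : (G.neighborSet v ∩ S).ncard ≤ 2)
    (hR : G.neighborSet v ∩ S ⊆ R) : v ∈ trellisCandidates G U S R := by
  have hpos := (Set.ncard_pos (Set.toFinite _)).mpr hne
  obtain h | h : (G.neighborSet v ∩ S).ncard = 1 ∨ (G.neighborSet v ∩ S).ncard = 2 := by omega
  · exact Or.inl (Or.inr ⟨hv, h, hR⟩)
  · exact Or.inr ⟨hv, h, hR⟩

theorem ncard_diff_union_le_of_trellis {R R' I' : Set α} (hRS : R ⊆ S) (hR'R : R' ⊆ R)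
    (hR' : R'.ncard ≤ 2) (hI' : I' ⊆ U \ S) (hne : ∀ v ∈ I', (G.neighborSet v ∩ S).Nonempty)
    (hind : IsIndep G ((S \ R') ∪ I'))
    (htrellis : ∀ I ⊆ trellisCandidates G U S R, IsIndep G I → (S \ R).ncard + I.ncard ≤ S.ncard) :
    ((S \ R') ∪ I').ncard ≤ S.ncard := by
  have hunion : (S \ R) ∪ (I' ∪ (R \ R')) = (S \ R') ∪ I' := by
    ext x
    constructor
    · rintro (⟨hxS, hxR⟩ | hxI' | ⟨hxR, hxR'⟩)
      exacts [Or.inl ⟨hxS, fun h => hxR (hR'R h)⟩, Or.inr hxI', Or.inl ⟨hRS hxR, hxR'⟩]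
    · rintro (⟨hxS, hxR'⟩ | hxI')
      · by_cases hxR : x ∈ R
        exacts [Or.inr (Or.inr ⟨hxR, hxR'⟩), Or.inl ⟨hxS, hxR⟩]
      · exact Or.inr (Or.inl hxI')
  have hcand : I' ∪ (R \ R') ⊆ trellisCandidates G U S R := by
    rintro v (hv | hv)
    · have hN := hind.neighborSet_inter_subset_of_diff_union hv
      exact mem_trellisCandidates (hI' hv) (hne v hv)
        ((Set.ncard_le_ncard hN).trans hR') (hN.trans hR'R)
    · exact Or.inl (Or.inl hv.1)
  have hgain := htrellis _ hcand (hind.mono (hunion ▸ Set.subset_union_right))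
  rw [← hunion]
  exact (Set.ncard_union_le _ _).trans hgain

theorem ncard_le_one_of_neighborSet_inter_subset_singleton (hS : IsIndep G S)
    (hmax1 : ∀ R ⊆ S, R.ncard = 1 → ∀ I ⊆ U \ S,
      IsIndep G ((S \ R) ∪ I) → ((S \ R) ∪ I).ncard ≤ S.ncard)
    {a : α} (ha : a ∈ S) {J : Set α} (hJ : J ⊆ U \ S) (hJind : IsIndep G J)
    (hN : ∀ v ∈ J, G.neighborSet v ∩ S ⊆ {a}) : J.ncard ≤ 1 := by
  have hswap := hmax1 {a} (Set.singleton_subset_iff.mpr ha) (Set.ncard_singleton a) J hJ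
    (hS.diff_union hJind hN)
  have hcount := Set.ncard_diff_union_add_ncard (Set.singleton_subset_iff.mpr ha)
    (Set.disjoint_right.mpr fun _ hv => (hJ hv).2)
  rw [Set.ncard_singleton] at hcount
  omega

theorem ncard_le_two_of_no_common_neighbor (hS : IsIndep G S)
    (hmax1 : ∀ R ⊆ S, R.ncard = 1 → ∀ I ⊆ U \ S,
      IsIndep G ((S \ R) ∪ I) → ((S \ R) ∪ I).ncard ≤ S.ncard)
    {a b : α} (ha : a ∈ S) (hb : b ∈ S) (hcommon : ∀ v, G.Adj v a → ¬ G.Adj v b)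
    {I : Set α} (hI : I ⊆ U \ S) (hind : IsIndep G ((S \ {a, b}) ∪ I)) : I.ncard ≤ 2 := by
  have hIind : IsIndep G I := hind.mono Set.subset_union_right
  have hsplit : I ⊆ {v ∈ I | G.neighborSet v ∩ S ⊆ {a}} ∪ {v ∈ I | G.neighborSet v ∩ S ⊆ {b}} := by
    intro v hv
    have hN := hind.neighborSet_inter_subset_of_diff_union hv
    by_cases hva : G.Adj v a
    · refine Or.inl ⟨hv, fun w hw => ?_⟩
      rcases hN hw with rfl | rfl
      exacts [rfl, absurd hw.1 (hcommon v hva)]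
    · refine Or.inr ⟨hv, fun w hw => ?_⟩
      rcases hN hw with rfl | rfl
      exacts [absurd hw.1 hva, rfl]
  have hpart (c : α) (hc : c ∈ S) : {v ∈ I | G.neighborSet v ∩ S ⊆ {c}}.ncard ≤ 1 :=
    ncard_le_one_of_neighborSet_inter_subset_singleton hS hmax1 hc
      (fun _ hv => hI hv.1) (hIind.mono fun _ hv => hv.1) fun _ hv => hv.2
  calc I.ncard ≤ _ := Set.ncard_le_ncard hsplit
    _ ≤ _ := Set.ncard_union_le _ _
    _ ≤ 2 := by linarith [hpart a ha, hpart b hb]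

end Swap

theorem GraphL.not_adj_of_adj_of_two_lt_hammingDist {n : ℕ} {L : Set (Fin 3 → Fin n)}
    {a b : Fin 3 → Fin n} (hab : 2 < hammingDist a b) (v : Fin 3 → Fin n)
    (ha : (GraphL L).Adj v a) : ¬ (GraphL L).Adj v b := fun hb => by
  have := hammingDist_triangle a v b
  rw [hammingDist_comm a v, ha.2.2, hb.2.2] at this
  omega

theorem trellis_maximal_implies_two_maximal_general (n : ℕ)
    (L : Set (Fin 3 → Fin n))
    (S : Set (Fin 3 → Fin n)) (hind : IsIndep (GraphL L) S)
    (hmax0 : ∀ v ∈ VL L \ S, ((GraphL L).neighborSet v ∩ S).Nonempty)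
    (hmax1 : ∀ R ⊆ S, R.ncard = 1 → ∀ I ⊆ VL L \ S,
      IsIndep (GraphL L) ((S \ R) ∪ I) → ((S \ R) ∪ I).ncard ≤ S.ncard)
    (htrellis : ∀ (d : Fin 3) (k : Fin n),
      ∀ I ⊆ (S ∩ {w : Fin 3 → Fin n | w d = k}) ∪
          {w | w ∈ VL L \ S ∧ ((GraphL L).neighborSet w ∩ S).ncard = 1 ∧
            (GraphL L).neighborSet w ∩ S ⊆ S ∩ {w' : Fin 3 → Fin n | w' d = k}} ∪
          {w | w ∈ VL L \ S ∧ ((GraphL L).neighborSet w ∩ S).ncard = 2 ∧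
            (GraphL L).neighborSet w ∩ S ⊆ S ∩ {w' : Fin 3 → Fin n | w' d = k}},
        IsIndep (GraphL L) I →
        (S \ (S ∩ {w : Fin 3 → Fin n | w d = k})).ncard + I.ncard ≤ S.ncard) :
    ∀ R' ⊆ S, R'.ncard = 2 → ∀ I' ⊆ VL L \ S,
      IsIndep (GraphL L) ((S \ R') ∪ I') → ((S \ R') ∪ I').ncard ≤ S.ncard := by
  intro R' hR'S hR'2 I' hI' hindI
  obtain ⟨r₁, r₂, -, rfl⟩ := Set.ncard_eq_two.mp hR'2
  have hr₁ : r₁ ∈ S := hR'S (Set.mem_insert _ _)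
  have hr₂ : r₂ ∈ S := hR'S (Set.mem_insert_of_mem _ rfl)
  by_cases hshare : ∃ d, r₁ d = r₂ d
  · obtain ⟨d, hd⟩ := hshare
    refine ncard_diff_union_le_of_trellis Set.inter_subset_left ?_ hR'2.le hI'
      (fun v hv => hmax0 v (hI' hv)) hindI (htrellis d (r₁ d))
    rintro x (rfl | rfl)
    exacts [⟨hr₁, rfl⟩, ⟨hr₂, hd.symm⟩]
  · push Not at hshare
    have hdist : 2 < hammingDist r₁ r₂ := by simp [hammingDist, hshare]
    have hle := ncard_le_two_of_no_common_neighbor hind hmax1 hr₁ hr₂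
      (GraphL.not_adj_of_adj_of_two_lt_hammingDist hdist) hI' hindI
    have hcount := Set.ncard_diff_union_add_ncard hR'S
      (Set.disjoint_right.mpr fun _ hv => (hI' hv).2)
    omega

/-- Trellis-swap generalizes `(2,n²)`-swap: a maximal, `(1,n²)`-maximal
and Trellis-maximal independent set of `G_L` is `(2,n²)`-maximal. -/
theorem trellis_maximal_implies_two_maximal (n : ℕ) (hn : 2 ≤ n)
    (L : Set (Fin 3 → Fin n)) (hL : IsPLS L)
    (S : Set (Fin 3 → Fin n)) (hsub : S ⊆ VL L) (hind : IsIndep (GraphL L) S)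
    (hmax0 : ∀ v ∈ VL L \ S, ((GraphL L).neighborSet v ∩ S).Nonempty)
    (hmax1 : ∀ R ⊆ S, R.ncard = 1 → ∀ I ⊆ VL L \ S,
      IsIndep (GraphL L) ((S \ R) ∪ I) → ((S \ R) ∪ I).ncard ≤ S.ncard)
    (htrellis : ∀ (d : Fin 3) (k : Fin n),
      ∀ I ⊆ (S ∩ {w : Fin 3 → Fin n | w d = k}) ∪
          {w | w ∈ VL L \ S ∧ ((GraphL L).neighborSet w ∩ S).ncard = 1 ∧
            (GraphL L).neighborSet w ∩ S ⊆ S ∩ {w' : Fin 3 → Fin n | w' d = k}} ∪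
          {w | w ∈ VL L \ S ∧ ((GraphL L).neighborSet w ∩ S).ncard = 2 ∧
            (GraphL L).neighborSet w ∩ S ⊆ S ∩ {w' : Fin 3 → Fin n | w' d = k}},
        IsIndep (GraphL L) I →
        (S \ (S ∩ {w : Fin 3 → Fin n | w d = k})).ncard + I.ncard ≤ S.ncard) :
    ∀ R' ⊆ S, R'.ncard = 2 → ∀ I' ⊆ VL L \ S,
      IsIndep (GraphL L) ((S \ R') ∪ I') → ((S \ R') ∪ I').ncard ≤ S.ncard :=
  trellis_maximal_implies_two_maximal_general n L S hind hmax0 hmax1 htrellis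
end
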